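/- Fix g ≥ 1 and indices i, j, k, l, m ∈ {1,…,g}, and define (wherever σ ≠ 0) ℬ_{ijklm} = ℘_{ij}℘_{klm} + (1/3)(℘_{jk}℘_{ilm} + ℘_{jl}℘_{ikm} + ℘_{jm}℘_{ikl} − 2℘_{kl}℘_{ijm} − 2℘_{km}℘_{ijl} − 2℘_{lm}℘_{ijk}). Then there exists a universal polynomial P in the partial derivatives of σ of order at most 3 such that for every infinitely complex-differentiable σ : ℂ^g → ℂ and every u with σ(u) ≠ 0, σ(u)³ · ℬ_{ijklm}(u) = P evaluated at the partial derivatives of σ at u. In particular, although each product ℘_{ab}℘_{cde} has poles of order five along the zero set of σ, the ℬ-function has poles of order at most three there. -/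

import Mathlib

/-!
Write `y_α = ∂^α σ(u)`. By the quotient rule `σ²℘_{ab}` and `σ³℘_{cde}` are polynomials in the
`y_α`, so `σ⁵ℬ_{ijklm}` is one too. Expanding each product `℘_{ab}℘_{cde}` in powers of `1/σ`, the
terms with poles of order five and four cancel identically in the combination defining `ℬ`
(a ring identity in the free variables `y_α`), so `σ⁵ℬ` is `σ²` times a cubic polynomial.
-/

noncomputable section

/-- Partial derivative in the `i`-th coordinate direction. -/
def pd {g : ℕ} (i : Fin g) (f : (Fin g → ℂ) → ℂ) : (Fin g → ℂ) → ℂ :=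
  fun u => fderiv ℂ f u (Pi.single i 1)

/-- Iterated partial derivative along a list of coordinate indices. -/
def pdIter {g : ℕ} (l : List (Fin g)) (f : (Fin g → ℂ) → ℂ) : (Fin g → ℂ) → ℂ :=
  l.foldl (fun h i => pd i h) f

/-- The 2-index Kleinian ℘-function ℘_{ij} = (σ_i σ_j − σ σ_{ij}) / σ². -/
def wp2 {g : ℕ} (σ : (Fin g → ℂ) → ℂ) (i j : Fin g) : (Fin g → ℂ) → ℂ :=
  fun u => (pd i σ u * pd j σ u - σ u * pd j (pd i σ) u) / σ u ^ 2

/-- The m-index Kleinian ℘-function ℘_{i j k₁ ⋯ k_r}, obtained from ℘_{ij} by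
successively differentiating with respect to the coordinates in `ks`. -/
def wp {g : ℕ} (σ : (Fin g → ℂ) → ℂ) (i j : Fin g) (ks : List (Fin g)) :
    (Fin g → ℂ) → ℂ :=
  ks.foldl (fun h k => pd k h) (wp2 σ i j)

/-- The ℬ-function ℬ_{ijklm} = ℘_{ij}℘_{klm} + (1/3)(℘_{jk}℘_{ilm} + ℘_{jl}℘_{ikm}
+ ℘_{jm}℘_{ikl} − 2℘_{kl}℘_{ijm} − 2℘_{km}℘_{ijl} − 2℘_{lm}℘_{ijk}). -/
def Bfun {g : ℕ} (σ : (Fin g → ℂ) → ℂ) (i j k l m : Fin g) : (Fin g → ℂ) → ℂ :=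
  fun u =>
    wp2 σ i j u * wp σ k l [m] u + (1 / 3) *
      (wp2 σ j k u * wp σ i l [m] u + wp2 σ j l u * wp σ i k [m] u
        + wp2 σ j m u * wp σ i k [l] u - 2 * wp2 σ k l u * wp σ i j [m] u
        - 2 * wp2 σ k m u * wp σ i j [l] u - 2 * wp2 σ l m u * wp σ i j [k] u)


open MvPolynomial

lemma ContDiff.pd {g : ℕ} {f : (Fin g → ℂ) → ℂ} (hf : ContDiff ℂ ⊤ f) (i : Fin g) :
    ContDiff ℂ ⊤ (_root_.pd i f) :=
  (hf.fderiv_right (by simp)).clm_apply contDiff_const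

lemma ContDiff.pdIter {g : ℕ} {f : (Fin g → ℂ) → ℂ} (hf : ContDiff ℂ ⊤ f) (α : List (Fin g)) :
    ContDiff ℂ ⊤ (_root_.pdIter α f) := by
  induction α generalizing f with
  | nil => exact hf
  | cons i α ih => exact ih (hf.pd i)

lemma pd_pdIter {g : ℕ} (i : Fin g) (α : List (Fin g)) (f : (Fin g → ℂ) → ℂ) :
    pd i (pdIter α f) = pdIter (α ++ [i]) f := by
  simp [pdIter, List.foldl_append]

section PartialDerivativeRules

variable {g : ℕ} {f h : (Fin g → ℂ) → ℂ} {u : Fin g → ℂ} (i : Fin g)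

lemma pd_sub (hf : DifferentiableAt ℂ f u) (hh : DifferentiableAt ℂ h u) :
    pd i (fun v => f v - h v) u = pd i f u - pd i h u := by
  simp [pd, fderiv_fun_sub hf hh]

lemma pd_mul (hf : DifferentiableAt ℂ f u) (hh : DifferentiableAt ℂ h u) :
    pd i (fun v => f v * h v) u = f u * pd i h u + h u * pd i f u := by
  simp [pd, fderiv_fun_mul hf hh]

lemma pd_pow (hf : DifferentiableAt ℂ f u) (n : ℕ) :
    pd i (fun v => f v ^ n) u = n * f u ^ (n - 1) * pd i f u := by
  simp [pd, fderiv_fun_pow n hf, mul_assoc]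

lemma pd_div (hf : DifferentiableAt ℂ f u) (hh : DifferentiableAt ℂ h u) (hu : h u ≠ 0) :
    pd i (fun v => f v / h v) u = (pd i f u * h u - f u * pd i h u) / h u ^ 2 := by
  have hinv : HasFDerivAt (fun v => (h v)⁻¹) ((-(h u ^ 2)⁻¹) • fderiv ℂ h u) u :=
    (hasDerivAt_inv hu).comp_hasFDerivAt u hh.hasFDerivAt
  simp only [pd, div_eq_mul_inv]
  rw [(hf.hasFDerivAt.fun_mul hinv).fderiv]
  simp only [add_apply, smul_apply, smul_eq_mul]
  field_simp
  ring

end PartialDerivativeRules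

section JetPolynomials

variable {R : Type*} [CommRing R] {g : ℕ} (y : List (Fin g) → R)

def wp2Numerator (a b : Fin g) : R :=
  y [a] * y [b] - y [] * y [a, b]

def wp3Numerator (a b c : Fin g) : R :=
  y [] * (y [a, c] * y [b] + y [a] * y [b, c] - y [c] * y [a, b] - y [] * y [a, b, c])
    - 2 * y [c] * wp2Numerator y a b

/-- `σ⁵ ℘_{ab} ℘_{cde}` with its terms of pole order four and five dropped, divided by `σ²`. -/
def reducedWpProduct (a b c d e : Fin g) : R :=
  y [] * y [a, b] * y [c, d, e] - y [a] * y [b] * y [c, d, e]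
    - y [a, b] * (y [d] * y [c, e] + y [c] * y [d, e] + y [e] * y [c, d])

def bCombination (c : R) (F : Fin g → Fin g → Fin g → Fin g → Fin g → R) (i j k l m : Fin g) : R :=
  F i j k l m + c * (F j k i l m + F j l i k m + F j m i k l
    - 2 * F k l i j m - 2 * F k m i j l - 2 * F l m i j k)

lemma map_bCombination {S F' : Type*} [CommRing S] [FunLike F' R S] [RingHomClass F' R S] (φ : F')
    (c : R) (F : Fin g → Fin g → Fin g → Fin g → Fin g → R) (i j k l m : Fin g) :
    φ (bCombination c F i j k l m)
      = bCombination (φ c) (fun a b c d e => φ (F a b c d e)) i j k l m := by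
  simp [bCombination, map_ofNat]

end JetPolynomials

lemma bCombination_wp2Numerator_mul_wp3Numerator {K : Type*} [Field K] [CharZero K] {g : ℕ}
    (y : List (Fin g) → K) (i j k l m : Fin g) :
    bCombination (1 / 3) (fun a b c d e => wp2Numerator y a b * wp3Numerator y c d e) i j k l m
      = y [] ^ 2 * bCombination (1 / 3) (reducedWpProduct y) i j k l m := by
  simp only [bCombination, wp2Numerator, wp3Numerator, reducedWpProduct]
  ring

lemma Bfun_eq_bCombination {g : ℕ} (σ : (Fin g → ℂ) → ℂ) (i j k l m : Fin g) (u : Fin g → ℂ) :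
    Bfun σ i j k l m u
      = bCombination (1 / 3) (fun a b c d e => wp2 σ a b u * wp σ c d [e] u) i j k l m := by
  simp only [Bfun, bCombination]
  ring

section KleinianFunctions

variable {g : ℕ} {σ : (Fin g → ℂ) → ℂ} {u : Fin g → ℂ}

lemma sq_mul_wp2 (hu : σ u ≠ 0) (a b : Fin g) :
    σ u ^ 2 * wp2 σ a b u = wp2Numerator (fun α => pdIter α σ u) a b := by
  rw [wp2, mul_div_cancel₀ _ (pow_ne_zero 2 hu)]
  rfl

lemma pow_three_mul_wp_singleton (hσ : ContDiff ℂ ⊤ σ) (hu : σ u ≠ 0) (a b c : Fin g) :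
    σ u ^ 3 * wp σ a b [c] u = wp3Numerator (fun α => pdIter α σ u) a b c := by
  have d (α : List (Fin g)) : DifferentiableAt ℂ (pdIter α σ) u :=
    ((hσ.pdIter α).differentiable (by simp)).differentiableAt
  change σ u ^ 3 * pd c (fun v => (pdIter [a] σ v * pdIter [b] σ v
    - pdIter [] σ v * pdIter [a, b] σ v) / pdIter [] σ v ^ 2) u = _
  rw [pd_div c (((d _).fun_mul (d _)).fun_sub ((d _).fun_mul (d _))) ((d []).fun_pow 2)
      (pow_ne_zero 2 hu),
    pd_sub c ((d _).fun_mul (d _)) ((d _).fun_mul (d _)), pd_mul c (d _) (d _),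
    pd_mul c (d _) (d _), pd_pow c (d []) 2]
  simp only [pd_pdIter, List.cons_append, List.nil_append, wp3Numerator, wp2Numerator]
  rw [show pdIter [] σ = σ from rfl]
  field_simp
  push_cast
  ring

end KleinianFunctions

/-- The indeterminate standing for `∂^α σ`; it is `0` for `α` longer than three. -/
def jetVar {g : ℕ} (α : List (Fin g)) : MvPolynomial {α : List (Fin g) // α.length ≤ 3} ℚ :=
  if h : α.length ≤ 3 then X ⟨α, h⟩ else 0

lemma aeval_reducedWpProduct_jetVar {A : Type*} [CommRing A] [Algebra ℚ A] {g : ℕ}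
    (y : List (Fin g) → A) (a b c d e : Fin g) :
    aeval (fun v : {α : List (Fin g) // α.length ≤ 3} => y v.1)
      (reducedWpProduct jetVar a b c d e) = reducedWpProduct y a b c d e := by
  simp [reducedWpProduct, jetVar]

theorem statement4_general {g : ℕ} (i j k l m : Fin g) :
    ∃ P : MvPolynomial {α : List (Fin g) // α.length ≤ 3} ℚ,
      ∀ σ : (Fin g → ℂ) → ℂ, ContDiff ℂ ⊤ σ → ∀ u : Fin g → ℂ, σ u ≠ 0 →
        σ u ^ 3 * Bfun σ i j k l m u
          = MvPolynomial.aeval (fun v : {α : List (Fin g) // α.length ≤ 3} =>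
              pdIter v.1 σ u) P := by
  refine ⟨bCombination (C (1 / 3)) (reducedWpProduct jetVar) i j k l m, fun σ hσ u hu => ?_⟩
  rw [map_bCombination, aeval_C]
  simp only [aeval_reducedWpProduct_jetVar (fun α => pdIter α σ u), map_div₀, map_one, map_ofNat]
  apply mul_left_cancel₀ (pow_ne_zero 2 hu)
  calc σ u ^ 2 * (σ u ^ 3 * Bfun σ i j k l m u)
      = bCombination (1 / 3) (fun a b c d e => wp2Numerator (fun α => pdIter α σ u) a b
          * wp3Numerator (fun α => pdIter α σ u) c d e) i j k l m := by
        rw [Bfun_eq_bCombination]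
        simp only [bCombination, ← sq_mul_wp2 hu, ← pow_three_mul_wp_singleton hσ hu]
        ring
    _ = σ u ^ 2 * bCombination (1 / 3) (reducedWpProduct fun α => pdIter α σ u) i j k l m :=
        bCombination_wp2Numerator_mul_wp3Numerator _ i j k l m

/-- there is a universal polynomial (with rational coefficients, in the
partial derivatives of σ of order at most 3) P such that σ³·ℬ_{ijklm} = P(∂^α σ);
in particular ℬ_{ijklm} has poles of order at most three along the zero set of σ. -/
theorem statement4 {g : ℕ} (hg : 1 ≤ g) (i j k l m : Fin g) :
    ∃ P : MvPolynomial {α : List (Fin g) // α.length ≤ 3} ℚ,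
      ∀ σ : (Fin g → ℂ) → ℂ, ContDiff ℂ ⊤ σ → ∀ u : Fin g → ℂ, σ u ≠ 0 →
        σ u ^ 3 * Bfun σ i j k l m u
          = MvPolynomial.aeval (fun v : {α : List (Fin g) // α.length ≤ 3} =>
              pdIter v.1 σ u) P :=
  statement4_general i j k l m
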